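/- The flow of the vector field X⁴ is explicit: for every p = (p₁, p₂, p₃) ∈ ℂ³, the curve γ : ℝ → ℂ³ defined by γ(t) = (p₁ + (p₂ − 1)t, p₂, p₃ − (p₂ − 1)t² − 2p₁t) satisfies γ(0) = p and γ′(t) = X⁴(γ(t)) for all t ∈ ℝ. -/

import Mathlib

open Complex

noncomputable section

/-- The holomorphic vector field `X⁴ = (z₂ − 1, 0, −2z₁)` on `ℂ³`. -/
def X4 : ℂ × ℂ × ℂ → ℂ × ℂ × ℂ := fun p => (p.2.1 - 1, 0, -2 * p.1)

theorem hasDerivAt_ofReal_quadratic (a b c : ℂ) (t : ℝ) :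
    HasDerivAt (fun s : ℝ => a + b * s + c * (s : ℂ) ^ 2) (b + 2 * c * t) t := by
  have h : HasDerivAt (fun z : ℂ => a + b * z + c * z ^ 2) (b + 2 * c * t) t :=
    ((((hasDerivAt_id (t : ℂ)).const_mul b).const_add a).add
      ((hasDerivAt_pow 2 (t : ℂ)).const_mul c)).congr_deriv
      (by simp only [mul_one, Nat.cast_ofNat, Nat.add_one_sub_one, pow_one]; ring)
  exact h.comp_ofReal

/-- The explicit flow of `X⁴`: through any `p ∈ ℂ³`, the curve
`γ(t) = (p₁ + (p₂ − 1)t, p₂, p₃ − (p₂ − 1)t² − 2p₁t)` is an integral curve of `X⁴`. -/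
theorem X4_flow (p : ℂ × ℂ × ℂ) (γ : ℝ → ℂ × ℂ × ℂ)
    (hγ : γ = fun t : ℝ =>
      (p.1 + (p.2.1 - 1) * (t : ℂ), p.2.1, p.2.2 - (p.2.1 - 1) * (t : ℂ) ^ 2 - 2 * p.1 * (t : ℂ))) :
    γ 0 = p ∧ ∀ t : ℝ, HasDerivAt γ (X4 (γ t)) t := by
  subst hγ
  refine ⟨by simp, fun t => ?_⟩
  have h₁ := hasDerivAt_ofReal_quadratic p.1 (p.2.1 - 1) 0 t
  have h₃ := hasDerivAt_ofReal_quadratic p.2.2 (-2 * p.1) (-(p.2.1 - 1)) t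
  convert h₁.prodMk ((hasDerivAt_const t p.2.1).prodMk h₃) using 1
  · ext s <;> simp only <;> ring
  · simp only [X4, Prod.mk.injEq]
    exact ⟨by ring, trivial, by ring⟩
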